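/- Let X be a separable metric space which is not both compact and finite-dimensional, and suppose tp_{S₁(𝓞_kfd,𝓞)}(X) = k is finite. Then there is a nonempty compact finite-dimensional set C ⊆ X such that for every open set U ⊇ C one has tp_{S₁(𝓞_kfd,𝓞)}(X \ U) ≤ k − 1, and for some open set U ⊇ C one has tp_{S₁(𝓞_kfd,𝓞)}(X \ U) = k − 1. -/

import Mathlib

open Set Topology

/-- The Lebesgue covering dimension of `X` is at most `n`: every finite open cover has an
open refinement, still covering `X`, in which every point lies in at most `n+1` members. -/
def CovDimLE (X : Type*) [TopologicalSpace X] (n : ℕ) : Prop :=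
  ∀ 𝓤 : Set (Set X), 𝓤.Finite → (∀ U ∈ 𝓤, IsOpen U) → ⋃₀ 𝓤 = Set.univ →
    ∃ 𝓥 : Set (Set X), (∀ V ∈ 𝓥, IsOpen V) ∧ ⋃₀ 𝓥 = Set.univ ∧
      (∀ V ∈ 𝓥, ∃ U ∈ 𝓤, V ⊆ U) ∧
      ∀ x : X, {V | V ∈ 𝓥 ∧ x ∈ V}.Finite ∧ {V | V ∈ 𝓥 ∧ x ∈ V}.ncard ≤ n + 1

/-- `X` is finite dimensional. -/
def FinDim (X : Type*) [TopologicalSpace X] : Prop :=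
  ∃ n : ℕ, CovDimLE X n

/-- The compact finite-dimensional subsets of `X` (as subspaces). -/
def kfdSets (X : Type*) [TopologicalSpace X] : Set (Set X) :=
  {T : Set X | IsCompact T ∧ FinDim T}

/-- The finite-dimensional subsets of `X` (as subspaces). -/
def fdSets (X : Type*) [TopologicalSpace X] : Set (Set X) :=
  {T : Set X | FinDim T}

/-- `X` is countable dimensional: a union of countably many zero-dimensional subsets. -/
def CountableDimensional (X : Type*) [TopologicalSpace X] : Prop :=
  ∃ Z : ℕ → Set X, (∀ n, CovDimLE (Z n) 0) ∧ (⋃ n, Z n) = Set.univ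

/-- `𝓤` is an open `𝓣`-cover of `X`. -/
def IsTCover {X : Type*} [TopologicalSpace X] (𝓣 𝓤 : Set (Set X)) : Prop :=
  (∀ U ∈ 𝓤, IsOpen U) ∧ (∀ x : X, ∃ U ∈ 𝓤, x ∈ U) ∧ ∀ T ∈ 𝓣, ∃ U ∈ 𝓤, T ⊆ U

/-- `𝓤` is an open cover of `X`. -/
def IsOpenCover {X : Type*} [TopologicalSpace X] (𝓤 : Set (Set X)) : Prop :=
  (∀ U ∈ 𝓤, IsOpen U) ∧ ∀ x : X, ∃ U ∈ 𝓤, x ∈ U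

/-- A strategy for TWO in the length-`α` game `G₁`: to each inning `γ < α` and each
history `(O_β : β ≤ γ)` of moves of ONE it assigns a response (a subset of `X`). -/
def TwoStrategy (X : Type*) (α : Ordinal.{0}) :=
  ∀ γ : Ordinal.{0}, γ < α → ((β : Ordinal.{0}) → β ≤ γ → Set (Set X)) → Set X

/-- The strategy `F` for TWO is winning in `G₁^α(𝓞(𝓣),𝓞)`: responses to legal histories are
elements of ONE's last move, and for every play of `𝓣`-covers by ONE the responses cover `X`. -/
def IsWinningTwo {X : Type*} [TopologicalSpace X] (𝓣 : Set (Set X)) (α : Ordinal.{0})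
    (F : TwoStrategy X α) : Prop :=
  (∀ (γ : Ordinal.{0}) (hγ : γ < α) (O : (β : Ordinal.{0}) → β ≤ γ → Set (Set X)),
      (∀ β hβ, IsTCover 𝓣 (O β hβ)) → F γ hγ O ∈ O γ le_rfl) ∧
  ∀ O : (γ : Ordinal.{0}) → γ < α → Set (Set X),
    (∀ γ hγ, IsTCover 𝓣 (O γ hγ)) →
    ∀ x : X, ∃ (γ : Ordinal.{0}) (hγ : γ < α),
      x ∈ F γ hγ (fun β hβ => O β (lt_of_le_of_lt hβ hγ))

/-- TWO has a winning strategy in `G₁^α(𝓞(𝓣),𝓞)` on `X`. -/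
def TwoWins (X : Type*) [TopologicalSpace X] (𝓣 : Set (Set X)) (α : Ordinal.{0}) : Prop :=
  ∃ F : TwoStrategy X α, IsWinningTwo 𝓣 α F

/-- `tp_{S₁(𝓞(𝓣),𝓞)}(X) = α`: TWO wins the length-`α` game but no shorter one. -/
def TPEq (X : Type*) [TopologicalSpace X] (𝓣 : Set (Set X)) (α : Ordinal.{0}) : Prop :=
  TwoWins X 𝓣 α ∧ ∀ β < α, ¬ TwoWins X 𝓣 β

/-- `tp_{S₁(𝓞(𝓣),𝓞)}(X) ≤ α`. -/
def TPLe (X : Type*) [TopologicalSpace X] (𝓣 : Set (Set X)) (α : Ordinal.{0}) : Prop :=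
  ∃ β ≤ α, TwoWins X 𝓣 β

/-- A strategy for TWO in the length-`α` game `G_c`. -/
def TwoStrategyC (X : Type*) (α : Ordinal.{0}) :=
  ∀ γ : Ordinal.{0}, γ < α → ((β : Ordinal.{0}) → β ≤ γ → Set (Set X)) → Set (Set X)

/-- The strategy `F` for TWO is winning in `G_c^α(𝓞,𝓞)`: to legal histories it responds with
pairwise disjoint families of open sets refining ONE's last move, and for every play of open
covers by ONE the union of the responses covers `X`. -/
def IsWinningTwoC {X : Type*} [TopologicalSpace X] (α : Ordinal.{0})
    (F : TwoStrategyC X α) : Prop :=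
  (∀ (γ : Ordinal.{0}) (hγ : γ < α) (O : (β : Ordinal.{0}) → β ≤ γ → Set (Set X)),
      (∀ β hβ, IsOpenCover (O β hβ)) →
        (∀ V ∈ F γ hγ O, IsOpen V) ∧ (F γ hγ O).Pairwise Disjoint ∧
          ∀ V ∈ F γ hγ O, ∃ U ∈ O γ le_rfl, V ⊆ U) ∧
  ∀ O : (γ : Ordinal.{0}) → γ < α → Set (Set X),
    (∀ γ hγ, IsOpenCover (O γ hγ)) →
    ∀ x : X, ∃ (γ : Ordinal.{0}) (hγ : γ < α),
      ∃ V ∈ F γ hγ (fun β hβ => O β (lt_of_le_of_lt hβ hγ)), x ∈ V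

/-- TWO has a winning strategy in `G_c^α(𝓞,𝓞)` on `X`. -/
def TwoWinsC (X : Type*) [TopologicalSpace X] (α : Ordinal.{0}) : Prop :=
  ∃ F : TwoStrategyC X α, IsWinningTwoC α F

/-- `tp_{S_c(𝓞,𝓞)}(X) = α`. -/
def TPCEq (X : Type*) [TopologicalSpace X] (α : Ordinal.{0}) : Prop :=
  TwoWinsC X α ∧ ∀ β < α, ¬ TwoWinsC X β

/-- `tp_{S_c(𝓞,𝓞)}(X) ≤ α`. -/
def TPCLe (X : Type*) [TopologicalSpace X] (α : Ordinal.{0}) : Prop :=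
  ∃ β ≤ α, TwoWinsC X β

/-!
Two facts about the finite games `G₁^n(𝓞_kfd, 𝓞)` drive the proof. First, TWO wins while only
having to cover `A` in `1 + α` innings iff every legal first move `O` of ONE has a member `T`
such that TWO wins covering `A \ T` in `α` innings. Second, on a closed subspace `Y` the game is
the game on `X` in which TWO only covers `Y`: `𝓞_kfd`-covers of `X` restrict to `Y`, and those
of `Y` extend to `X` by adding `Yᶜ`.

With `k = n + 1`, if no compact finite-dimensional `C` had the property that every open `U ⊇ C`
leaves `X \ U` winnable in `n` innings, the witnessing sets `U` would form an `𝓞_kfd`-cover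
without a good member. Conversely, if every such `X \ U` were winnable in fewer than `n`
innings, TWO would win on `X` in `n` innings by first choosing a member containing `C`,
contradicting minimality of `k`.
-/

section Dimension

variable {Y Z : Type*} [TopologicalSpace Y] [TopologicalSpace Z]

theorem covDimLE_zero_of_subsingleton [Subsingleton Y] : CovDimLE Y 0 := by
  intro 𝓤 _ hopen hcov
  refine ⟨𝓤 ∩ {univ}, fun V hV => hopen V hV.1, ?_, fun V hV => ⟨V, hV.1, subset_rfl⟩,
    fun y => ⟨(finite_singleton univ).subset fun V hV => hV.1.2, ?_⟩⟩
  · refine eq_univ_of_forall fun y => ?_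
    obtain ⟨U, hU, hy⟩ := mem_sUnion.1 (hcov ▸ mem_univ y)
    exact ⟨U, ⟨hU, eq_univ_of_forall fun y' => Subsingleton.elim y y' ▸ hy⟩, hy⟩
  · calc {V | V ∈ 𝓤 ∩ {univ} ∧ y ∈ V}.ncard ≤ ({univ} : Set (Set Y)).ncard :=
          ncard_le_ncard (fun V hV => hV.1.2) (finite_singleton univ)
      _ = 0 + 1 := by simp

theorem finDim_of_subsingleton [Subsingleton Y] : FinDim Y :=
  ⟨0, covDimLE_zero_of_subsingleton⟩

theorem CovDimLE.of_isClosedEmbedding {f : Y → Z} (hf : IsClosedEmbedding f) {n : ℕ}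
    (h : CovDimLE Z n) : CovDimLE Y n := by
  intro 𝓤 hfin hopen hcov
  have hext : ∀ U ∈ 𝓤, ∃ W, IsOpen W ∧ f ⁻¹' W = U := fun U hU =>
    hf.isInducing.isOpen_iff.1 (hopen U hU)
  choose! W hWopen hWU using hext
  obtain ⟨𝓥, hVopen, hVcov, hVref, hVmult⟩ := h (insert (range f)ᶜ (W '' 𝓤))
    ((hfin.image W).insert _)
    (by
      rintro _ (rfl | ⟨U, hU, rfl⟩)
      exacts [hf.isClosed_range.isOpen_compl, hWopen U hU])
    (by
      refine eq_univ_of_forall fun z => ?_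
      by_cases hz : z ∈ range f
      · obtain ⟨y, rfl⟩ := hz
        obtain ⟨U, hU, hy⟩ := mem_sUnion.1 (hcov ▸ mem_univ y)
        exact ⟨W U, mem_insert_of_mem _ ⟨U, hU, rfl⟩, show y ∈ f ⁻¹' W U by rwa [hWU U hU]⟩
      · exact ⟨_, mem_insert _ _, hz⟩)
  refine ⟨(f ⁻¹' ·) '' 𝓥 ∩ {V' | ∃ U ∈ 𝓤, V' ⊆ U}, ?_, ?_, fun V' hV' => hV'.2, fun y => ?_⟩
  · rintro _ ⟨⟨V, hV, rfl⟩, -⟩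
    exact (hVopen V hV).preimage hf.continuous
  · refine eq_univ_of_forall fun y => ?_
    obtain ⟨V, hV, hy⟩ := mem_sUnion.1 (hVcov ▸ mem_univ (f y))
    obtain ⟨_, (rfl | ⟨U, hU, rfl⟩), hVW⟩ := hVref V hV
    · exact absurd (mem_range_self y) (hVW hy)
    · exact ⟨f ⁻¹' V, ⟨⟨V, hV, rfl⟩, U, hU, (hWU U hU) ▸ preimage_mono hVW⟩, hy⟩
  · have hsub : {V' | V' ∈ (f ⁻¹' ·) '' 𝓥 ∩ {V' | ∃ U ∈ 𝓤, V' ⊆ U} ∧ y ∈ V'} ⊆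
        (f ⁻¹' ·) '' {V | V ∈ 𝓥 ∧ f y ∈ V} := by
      rintro _ ⟨⟨⟨V, hV, rfl⟩, -⟩, hy⟩
      exact ⟨V, ⟨hV, hy⟩, rfl⟩
    have hfin' := (hVmult (f y)).1.image (f ⁻¹' ·)
    refine ⟨hfin'.subset hsub, ?_⟩
    calc _ ≤ ((f ⁻¹' ·) '' {V | V ∈ 𝓥 ∧ f y ∈ V}).ncard := ncard_le_ncard hsub hfin'
      _ ≤ {V | V ∈ 𝓥 ∧ f y ∈ V}.ncard := ncard_image_le (hVmult (f y)).1
      _ ≤ n + 1 := (hVmult (f y)).2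

theorem FinDim.of_isClosedEmbedding {f : Y → Z} (hf : IsClosedEmbedding f) (h : FinDim Z) :
    FinDim Y :=
  let ⟨n, hn⟩ := h
  ⟨n, hn.of_isClosedEmbedding hf⟩

end Dimension

section Kfd

variable {X Y : Type*} [TopologicalSpace X] [TopologicalSpace Y]

theorem empty_mem_kfdSets : (∅ : Set X) ∈ kfdSets X :=
  ⟨isCompact_empty, finDim_of_subsingleton⟩

theorem singleton_mem_kfdSets (x : X) : {x} ∈ kfdSets X :=
  ⟨isCompact_singleton, finDim_of_subsingleton⟩

theorem image_mem_kfdSets {f : Y → X} (hf : IsEmbedding f) {S : Set Y} (hS : S ∈ kfdSets Y) :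
    f '' S ∈ kfdSets X :=
  ⟨hS.1.image hf.continuous,
    hS.2.of_isClosedEmbedding (hf.homeomorphImage S).symm.isClosedEmbedding⟩

theorem preimage_mem_kfdSets {f : Y → X} (hf : IsClosedEmbedding f) {K : Set X}
    (hK : K ∈ kfdSets X) : f ⁻¹' K ∈ kfdSets Y :=
  ⟨hf.isCompact_preimage hK.1, hK.2.of_isClosedEmbedding (hf.restrictPreimage K)⟩

theorem isTCover_kfdSets_iff {O : Set (Set X)} :
    IsTCover (kfdSets X) O ↔ (∀ U ∈ O, IsOpen U) ∧ ∀ K ∈ kfdSets X, ∃ U ∈ O, K ⊆ U := by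
  refine ⟨fun h => ⟨h.1, h.2.2⟩, fun h => ⟨h.1, fun x => ?_, h.2⟩⟩
  obtain ⟨U, hU, hxU⟩ := h.2 {x} (singleton_mem_kfdSets x)
  exact ⟨U, hU, hxU rfl⟩

theorem IsTCover.preimage_kfdSets {f : Y → X} (hf : IsEmbedding f) {O : Set (Set X)}
    (hO : IsTCover (kfdSets X) O) : IsTCover (kfdSets Y) ((f ⁻¹' ·) '' O) := by
  refine isTCover_kfdSets_iff.2 ⟨?_, fun S hS => ?_⟩
  · rintro _ ⟨U, hU, rfl⟩
    exact (hO.1 U hU).preimage hf.continuous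
  · obtain ⟨U, hU, hSU⟩ := hO.2.2 _ (image_mem_kfdSets hf hS)
    exact ⟨_, ⟨U, hU, rfl⟩, image_subset_iff.1 hSU⟩

theorem IsTCover.of_preimage_kfdSets {f : Y → X} (hf : IsClosedEmbedding f) {O' : Set (Set Y)}
    (hO' : IsTCover (kfdSets Y) O') :
    IsTCover (kfdSets X) {T | IsOpen T ∧ (range f)ᶜ ⊆ T ∧ f ⁻¹' T ∈ O'} := by
  refine isTCover_kfdSets_iff.2 ⟨fun T hT => hT.1, fun K hK => ?_⟩
  obtain ⟨V, hV, hKV⟩ := hO'.2.2 _ (preimage_mem_kfdSets hf hK)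
  obtain ⟨W, hW, rfl⟩ := hf.isInducing.isOpen_iff.1 (hO'.1 V hV)
  refine ⟨W ∪ (range f)ᶜ, ⟨hW.union hf.isClosed_range.isOpen_compl, subset_union_right, ?_⟩, ?_⟩
  · rwa [preimage_union, preimage_compl, preimage_range, compl_univ, union_empty]
  · intro x hx
    by_cases hxf : x ∈ range f
    · obtain ⟨y, rfl⟩ := hxf
      exact Or.inl (hKV hx)
    · exact Or.inr hxf

theorem exists_nonempty_forall_isOpen_of_forall_isTCover {𝓣 : Set (Set X)} [Nonempty X]
    (h𝓣 : ∀ x, ∃ C ∈ 𝓣, x ∈ C) {P : Set X → Prop}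
    (h : ∀ O, IsTCover 𝓣 O → ∃ T ∈ O, P T) :
    ∃ C ∈ 𝓣, C.Nonempty ∧ ∀ U, IsOpen U → C ⊆ U → P U := by
  by_contra! H
  choose U hUopen hCU hPU using H
  obtain ⟨C₀, hC₀, hx₀⟩ := h𝓣 (Classical.arbitrary X)
  have hO : IsTCover 𝓣 {V | ∃ C, ∃ (hC : C ∈ 𝓣) (hne : C.Nonempty), U C hC hne = V} := by
    refine ⟨?_, fun x => ?_, fun T hT => ?_⟩
    · rintro _ ⟨C, hC, hne, rfl⟩
      exact hUopen C hC hne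
    · obtain ⟨C, hC, hx⟩ := h𝓣 x
      exact ⟨_, ⟨C, hC, ⟨x, hx⟩, rfl⟩, hCU C hC ⟨x, hx⟩ hx⟩
    · rcases T.eq_empty_or_nonempty with rfl | hne
      · exact ⟨_, ⟨C₀, hC₀, ⟨_, hx₀⟩, rfl⟩, empty_subset _⟩
      · exact ⟨_, ⟨T, hT, hne, rfl⟩, hCU T hT hne⟩
  obtain ⟨_, ⟨C, hC, hne, rfl⟩, hP⟩ := h _ hO
  exact hPU C hC hne hP

end Kfd

section Strategy

variable {X : Type*} {α : Ordinal.{0}}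

theorem TwoStrategy.apply_congr (F : TwoStrategy X α)
    {γ₁ γ₂ : Ordinal.{0}} (h : γ₁ = γ₂) (h₁ : γ₁ < α) (h₂ : γ₂ < α)
    {H₁ : (β : Ordinal.{0}) → β ≤ γ₁ → Set (Set X)} {H₂ : (β : Ordinal.{0}) → β ≤ γ₂ → Set (Set X)}
    (hH : ∀ β hβ₁ hβ₂, H₁ β hβ₁ = H₂ β hβ₂) : F γ₁ h₁ H₁ = F γ₂ h₂ H₂ := by
  subst h
  exact congrArg _ (funext fun β => funext fun hβ => hH β hβ hβ)

theorem Ordinal.zero_lt_one_add (α : Ordinal) : 0 < 1 + α :=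
  zero_lt_one.trans_le le_self_add

theorem Ordinal.sub_one_lt_of_lt_one_add {α γ : Ordinal} (hγ : γ < 1 + α) (h : γ ≠ 0) :
    γ - 1 < α := by
  rw [← Ordinal.add_sub_cancel_of_le (Order.one_le_iff_ne_zero.2 h)] at hγ
  exact (add_lt_add_iff_left 1).1 hγ

theorem Ordinal.one_add_le_of_le_sub_one {β γ : Ordinal} (h : γ ≠ 0) (hβ : β ≤ γ - 1) :
    1 + β ≤ γ :=
  (Ordinal.le_sub_of_le (Order.one_le_iff_ne_zero.2 h)).1 hβ

/-- Inning `γ` of the residual game is inning `1 + γ` of the original one (for infinite `γ`,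
`γ + 1` would be the wrong shift). -/
noncomputable def TwoStrategy.residual (F : TwoStrategy X (1 + α)) (O : Set (Set X)) :
    TwoStrategy X α := fun γ hγ H =>
  F (1 + γ) ((add_lt_add_iff_left 1).2 hγ) fun β hβ =>
    if β = 0 then O else H (β - 1) (Ordinal.sub_le.2 hβ)

noncomputable def TwoStrategy.cons (T : Set (Set X) → Set X)
    (S : Set (Set X) → TwoStrategy X α) : TwoStrategy X (1 + α) := fun γ hγ H =>
  if h : γ = 0 then T (H 0 (zero_le (a := γ)))
  else S (H 0 (zero_le (a := γ))) (γ - 1) (Ordinal.sub_one_lt_of_lt_one_add hγ h)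
    fun β hβ => H (1 + β) (Ordinal.one_add_le_of_le_sub_one h hβ)

end Strategy

section Game

variable {X : Type*} [TopologicalSpace X]

/-- The game in which ONE still plays `𝓣`-covers of `X` but TWO only has to cover `A`. -/
def IsWinningTwoOn (𝓣 : Set (Set X)) (A : Set X) (α : Ordinal.{0})
    (F : TwoStrategy X α) : Prop :=
  (∀ (γ : Ordinal.{0}) (hγ : γ < α) (O : (β : Ordinal.{0}) → β ≤ γ → Set (Set X)),
      (∀ β hβ, IsTCover 𝓣 (O β hβ)) → F γ hγ O ∈ O γ le_rfl) ∧
  ∀ O : (γ : Ordinal.{0}) → γ < α → Set (Set X),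
    (∀ γ hγ, IsTCover 𝓣 (O γ hγ)) →
    ∀ x ∈ A, ∃ (γ : Ordinal.{0}) (hγ : γ < α),
      x ∈ F γ hγ (fun β hβ => O β (lt_of_le_of_lt hβ hγ))

def TwoWinsOn (𝓣 : Set (Set X)) (A : Set X) (α : Ordinal.{0}) : Prop :=
  ∃ F : TwoStrategy X α, IsWinningTwoOn 𝓣 A α F

theorem twoWins_iff_twoWinsOn_univ {𝓣 : Set (Set X)} {α : Ordinal.{0}} :
    TwoWins X 𝓣 α ↔ TwoWinsOn 𝓣 univ α := by
  simp [TwoWins, TwoWinsOn, IsWinningTwo, IsWinningTwoOn]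

/-- `∅ ∈ 𝓣` makes every legal move of ONE nonempty, so TWO has a legal answer in the extra
innings. -/
theorem TwoWinsOn.mono {𝓣 : Set (Set X)} (h𝓣 : ∅ ∈ 𝓣) {A : Set X} {α β : Ordinal.{0}}
    (h : TwoWinsOn 𝓣 A α) (hαβ : α ≤ β) : TwoWinsOn 𝓣 A β := by
  obtain ⟨F, hlegal, hwin⟩ := h
  refine ⟨fun γ _ H => if hγ : γ < α then F γ hγ H else Classical.epsilon (· ∈ H γ le_rfl),
    fun γ _ H hH => ?_, fun O hO x hx => ?_⟩
  · dsimp only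
    split_ifs with hγ
    · exact hlegal γ hγ H hH
    · obtain ⟨U, hU, -⟩ := (hH γ le_rfl).2.2 ∅ h𝓣
      exact Classical.epsilon_spec ⟨U, hU⟩
  · obtain ⟨γ, hγ, hx⟩ := hwin (fun γ hγ => O γ (hγ.trans_le hαβ)) (fun γ hγ => hO _ _) x hx
    exact ⟨γ, hγ.trans_le hαβ, by simpa only [dif_pos hγ]⟩

theorem twoWinsOn_zero_iff {𝓣 : Set (Set X)} {A : Set X} : TwoWinsOn 𝓣 A 0 ↔ A = ∅ := by
  refine ⟨fun ⟨F, _, hwin⟩ => eq_empty_of_forall_notMem fun x hx => ?_, fun hA => ?_⟩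
  · obtain ⟨γ, hγ, -⟩ := hwin (fun γ hγ => absurd hγ not_lt_zero)
      (fun γ hγ => absurd hγ not_lt_zero) x hx
    exact not_lt_zero hγ
  · exact ⟨fun _ _ _ => ∅, fun γ hγ => absurd hγ not_lt_zero,
      fun _ _ x hx => absurd hx (hA ▸ notMem_empty x)⟩

theorem TwoWinsOn.exists_mem_twoWinsOn_diff {𝓣 : Set (Set X)} {A : Set X} {α : Ordinal.{0}}
    (h : TwoWinsOn 𝓣 A (1 + α)) {O : Set (Set X)} (hO : IsTCover 𝓣 O) :
    ∃ T ∈ O, TwoWinsOn 𝓣 (A \ T) α := by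
  obtain ⟨F, hlegal, hwin⟩ := h
  have h0 := Ordinal.zero_lt_one_add α
  refine ⟨F 0 h0 fun _ _ => O, hlegal 0 h0 _ fun _ _ => hO, F.residual O, ?_, ?_⟩
  · intro γ hγ H hH
    have hmem := hlegal (1 + γ) ((add_lt_add_iff_left 1).2 hγ)
      (fun β hβ => if β = 0 then O else H (β - 1) (Ordinal.sub_le.2 hβ)) fun β hβ => by
        split_ifs
        exacts [hO, hH _ _]
    rw [if_neg (by simp)] at hmem
    change F (1 + γ) _ _ ∈ H γ le_rfl
    convert hmem using 2
    exact (Ordinal.add_sub_cancel 1 γ).symm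
  · intro P hP x hx
    let Q : (β : Ordinal.{0}) → β < 1 + α → Set (Set X) := fun β hβ =>
      if h : β = 0 then O else P (β - 1) (Ordinal.sub_one_lt_of_lt_one_add hβ h)
    have hQ : ∀ β hβ, IsTCover 𝓣 (Q β hβ) := fun β hβ => by
      dsimp only [Q]
      split_ifs
      exacts [hO, hP _ _]
    obtain ⟨γ, hγ, hxγ⟩ := hwin Q hQ x hx.1
    by_cases hγ0 : γ = 0
    · refine absurd ?_ hx.2
      rwa [F.apply_congr hγ0 hγ h0 (H₂ := fun _ _ => O) fun β hβ _ => by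
        simp [Q, le_antisymm (hγ0 ▸ hβ) (zero_le (a := β))]] at hxγ
    · refine ⟨γ - 1, Ordinal.sub_one_lt_of_lt_one_add hγ hγ0, ?_⟩
      convert hxγ using 1
      rw [TwoStrategy.residual]
      refine F.apply_congr (Ordinal.add_sub_cancel_of_le (Order.one_le_iff_ne_zero.2 hγ0)) _ _
        fun β _ _ => ?_
      simp only [Q]
      split_ifs <;> rfl

theorem twoWinsOn_one_add_iff {𝓣 : Set (Set X)} {A : Set X} {α : Ordinal.{0}} :
    TwoWinsOn 𝓣 A (1 + α) ↔ ∀ O, IsTCover 𝓣 O → ∃ T ∈ O, TwoWinsOn 𝓣 (A \ T) α := by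
  refine ⟨fun h O hO => h.exists_mem_twoWinsOn_diff hO, fun h => ?_⟩
  have h' : ∀ O, ∃ (T : Set X) (S : TwoStrategy X α),
      IsTCover 𝓣 O → T ∈ O ∧ IsWinningTwoOn 𝓣 (A \ T) α S := fun O => by
    by_cases hO : IsTCover 𝓣 O
    · obtain ⟨T, hT, S, hS⟩ := h O hO
      exact ⟨T, S, fun _ => ⟨hT, hS⟩⟩
    · exact ⟨∅, fun _ _ _ => ∅, fun h => absurd h hO⟩
  choose T S hTS using h'
  have h0 := Ordinal.zero_lt_one_add α
  refine ⟨TwoStrategy.cons T S, fun γ hγ H hH => ?_, fun P hP x hx => ?_⟩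
  · unfold TwoStrategy.cons
    split_ifs with hγ0
    · subst hγ0
      exact (hTS _ (hH 0 _)).1
    · have hmem := (hTS _ (hH 0 (zero_le (a := γ)))).2.1 (γ - 1)
        (Ordinal.sub_one_lt_of_lt_one_add hγ hγ0)
        (fun β hβ => H (1 + β) (Ordinal.one_add_le_of_le_sub_one hγ0 hβ)) fun β hβ => hH _ _
      convert hmem using 2
      exact (Ordinal.add_sub_cancel_of_le (Order.one_le_iff_ne_zero.2 hγ0)).symm
  · by_cases hxT : x ∈ T (P 0 h0)
    · exact ⟨0, h0, by simpa [TwoStrategy.cons] using hxT⟩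
    · obtain ⟨δ, hδ, hxδ⟩ := (hTS _ (hP 0 h0)).2.2
        (fun β hβ => P (1 + β) ((add_lt_add_iff_left 1).2 hβ)) (fun β hβ => hP _ _) x ⟨hx, hxT⟩
      refine ⟨1 + δ, (add_lt_add_iff_left 1).2 hδ, ?_⟩
      rw [TwoStrategy.cons, dif_neg (by simp)]
      convert hxδ using 1
      exact (S _).apply_congr (Ordinal.add_sub_cancel 1 δ) _ _ fun β _ _ => rfl

end Game

section Transfer

variable {X Y : Type*} [TopologicalSpace X] [TopologicalSpace Y]

theorem twoWinsOn_kfdSets_image_iff {f : Y → X} (hf : IsClosedEmbedding f) (n : ℕ) {B : Set Y} :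
    TwoWinsOn (kfdSets X) (f '' B) n ↔ TwoWinsOn (kfdSets Y) B n := by
  induction n generalizing B with
  | zero => simp [twoWinsOn_zero_iff]
  | succ n ih =>
    rw [Nat.cast_succ, Nat.cast_add_one_comm, twoWinsOn_one_add_iff, twoWinsOn_one_add_iff]
    constructor
    · intro h O' hO'
      obtain ⟨T, ⟨-, -, hT⟩, hwin⟩ := h _ (hO'.of_preimage_kfdSets hf)
      exact ⟨f ⁻¹' T, hT, ih.1 (by rwa [image_sdiff_preimage])⟩
    · intro h O hO
      obtain ⟨_, ⟨T, hT, rfl⟩, hwin⟩ := h _ (hO.preimage_kfdSets hf.isEmbedding)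
      exact ⟨T, hT, by rw [← image_sdiff_preimage]; exact ih.2 hwin⟩

theorem twoWins_subtype_iff {A : Set X} (hA : IsClosed A) (n : ℕ) :
    TwoWins A (kfdSets A) n ↔ TwoWinsOn (kfdSets X) A n := by
  rw [twoWins_iff_twoWinsOn_univ, ← twoWinsOn_kfdSets_image_iff hA.isClosedEmbedding_subtypeVal,
    image_univ, Subtype.range_coe]

theorem exists_forall_twoWins_compl [Nonempty X] {n : ℕ}
    (h : TwoWins X (kfdSets X) (n + 1 : ℕ)) :
    ∃ C ∈ kfdSets X, C.Nonempty ∧ ∀ U, IsOpen U → C ⊆ U → TwoWins ↥Uᶜ (kfdSets ↥Uᶜ) n := by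
  rw [twoWins_iff_twoWinsOn_univ, Nat.cast_succ, Nat.cast_add_one_comm] at h
  obtain ⟨C, hC, hCne, hCwin⟩ := exists_nonempty_forall_isOpen_of_forall_isTCover
    (fun x => ⟨{x}, singleton_mem_kfdSets x, rfl⟩) (twoWinsOn_one_add_iff.1 h)
  refine ⟨C, hC, hCne, fun U hU hCU => (twoWins_subtype_iff hU.isClosed_compl n).2 ?_⟩
  simpa [compl_eq_univ_sdiff] using hCwin U hU hCU

theorem twoWins_of_forall_tpLe_compl {C : Set X} (hC : C ∈ kfdSets X) {m : ℕ}
    (h : ∀ U, IsOpen U → C ⊆ U → TPLe ↥Uᶜ (kfdSets ↥Uᶜ) m) :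
    TwoWins X (kfdSets X) (m + 1 : ℕ) := by
  rw [twoWins_iff_twoWinsOn_univ, Nat.cast_succ, Nat.cast_add_one_comm]
  refine twoWinsOn_one_add_iff.2 fun O hO => ?_
  obtain ⟨T, hT, hCT⟩ := hO.2.2 C hC
  obtain ⟨β, hβ, hwin⟩ := h T (hO.1 T hT) hCT
  rw [twoWins_iff_twoWinsOn_univ] at hwin
  refine ⟨T, hT, ?_⟩
  rw [← compl_eq_univ_sdiff, ← twoWins_subtype_iff (hO.1 T hT).isClosed_compl,
    twoWins_iff_twoWinsOn_univ]
  exact hwin.mono empty_mem_kfdSets hβ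

end Transfer

theorem statement_4_general {X : Type*} [MetricSpace X]
    (hX : ¬ (CompactSpace X ∧ FinDim X)) (k : ℕ)
    (htp : TPEq X (kfdSets X) (k : Ordinal.{0})) :
    ∃ C : Set X, C.Nonempty ∧ C ∈ kfdSets X ∧
      (∀ U : Set X, IsOpen U → C ⊆ U →
        TPLe ↥(Uᶜ) (kfdSets ↥(Uᶜ)) ((k - 1 : ℕ) : Ordinal.{0})) ∧
      ∃ U : Set X, IsOpen U ∧ C ⊆ U ∧
        TPEq ↥(Uᶜ) (kfdSets ↥(Uᶜ)) ((k - 1 : ℕ) : Ordinal.{0}) := by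
  have : Nonempty X := by
    by_contra! hempty
    exact hX ⟨inferInstance, finDim_of_subsingleton⟩
  obtain ⟨hwin, hmin⟩ := htp
  obtain ⟨n, rfl⟩ : ∃ n, k = n + 1 := Nat.exists_eq_add_one.2 <| Nat.pos_of_ne_zero fun hk => by
    simp [hk, twoWins_iff_twoWinsOn_univ, twoWinsOn_zero_iff] at hwin
  obtain ⟨C, hC, hCne, hcompl⟩ := exists_forall_twoWins_compl hwin
  rw [Nat.add_sub_cancel]
  refine ⟨C, hCne, hC, fun U hU hCU => ⟨n, le_rfl, hcompl U hU hCU⟩, ?_⟩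
  by_contra! hshort
  have hfewer : ∀ U, IsOpen U → C ⊆ U → ∃ β < (n : Ordinal.{0}), TwoWins ↥Uᶜ (kfdSets ↥Uᶜ) β :=
    fun U hU hCU => by simpa [TPEq, hcompl U hU hCU] using hshort U hU hCU
  obtain ⟨m, rfl⟩ : ∃ m, n = m + 1 := Nat.exists_eq_add_one.2 <| by
    obtain ⟨β, hβ, -⟩ := hfewer univ isOpen_univ (subset_univ C)
    exact_mod_cast (zero_le (a := β)).trans_lt hβ
  refine hmin (m + 1 : ℕ) (by exact_mod_cast Nat.lt_succ_self _) ?_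
  refine twoWins_of_forall_tpLe_compl hC fun U hU hCU => ?_
  obtain ⟨β, hβ, hwin⟩ := hfewer U hU hCU
  rw [Nat.cast_succ, Order.lt_add_one_iff] at hβ
  exact ⟨β, hβ, hwin⟩

theorem statement_4 {X : Type*} [MetricSpace X] [TopologicalSpace.SeparableSpace X]
    (hX : ¬ (CompactSpace X ∧ FinDim X)) (k : ℕ)
    (htp : TPEq X (kfdSets X) (k : Ordinal.{0})) :
    ∃ C : Set X, C.Nonempty ∧ C ∈ kfdSets X ∧
      (∀ U : Set X, IsOpen U → C ⊆ U →
        TPLe ↥(Uᶜ) (kfdSets ↥(Uᶜ)) ((k - 1 : ℕ) : Ordinal.{0})) ∧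
      ∃ U : Set X, IsOpen U ∧ C ⊆ U ∧
        TPEq ↥(Uᶜ) (kfdSets ↥(Uᶜ)) ((k - 1 : ℕ) : Ordinal.{0}) :=
  statement_4_general hX k htp
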